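/- arXiv:2501.14286 — 4 statements merged into one kernel-verified Lean document; each statement's English description precedes it below -/
import Mathlib

section
/- Let φ_a: ℋ+wu ↪ 𝒢 be an extension of an embedding φ: ℋ ↪ 𝒢 of an edge-colored rooted graph ℋ, obtained by attaching a new vertex u to w by an edge of color r and embedding u at vertex a. Then for every X ⊆ V(𝒢)×[t], R(X,φ_a) − R(X,φ) = 1[(φ(w),r) ∈ X] − 1[a ∈ Γ_𝒢(X)]. -/
open Finset
open scoped Classical

noncomputable section

/-- Number of ordered adjacent pairs between `X` and `Y` in the graph `G`. -/
def epairs {V : Type*} (G : SimpleGraph V) (X Y : Finset V) : ℕ :=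
  ((X ×ˢ Y).filter fun p => G.Adj p.1 p.2).card

/-- `G` is `(p,β)`-jumbled. -/
def IsJumbled {V : Type*} (G : SimpleGraph V) (p β : ℝ) : Prop :=
  ∀ X Y : Finset V,
    |(epairs G X Y : ℝ) - p * X.card * Y.card| ≤ β * Real.sqrt (X.card * Y.card)

/-- `G` is `s`-joined. -/
def IsJoined {V : Type*} (G : SimpleGraph V) (s : ℕ) : Prop :=
  ∀ X Y : Finset V, s ≤ X.card → s ≤ Y.card → 0 < epairs G X Y

/-- Ordered adjacent pairs between `X ⊆ V × [t]` and `Y ⊆ V` in the auxiliary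
bipartite graph of the family `𝒢`. -/
def famPairs {V : Type*} {t : ℕ} (𝒢 : Fin t → SimpleGraph V)
    (X : Finset (V × Fin t)) (Y : Finset V) : ℕ :=
  ((X ×ˢ Y).filter fun p => (𝒢 p.1.2).Adj p.1.1 p.2).card

/-- The family `𝒢` is `(p,β)`-jumbled (its auxiliary bipartite graph is bijumbled). -/
def FamJumbled {V : Type*} {t : ℕ} (𝒢 : Fin t → SimpleGraph V) (p β : ℝ) : Prop :=
  ∀ (X : Finset (V × Fin t)) (Y : Finset V),
    |(famPairs 𝒢 X Y : ℝ) - p * X.card * Y.card| ≤ β * Real.sqrt (X.card * Y.card)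

/-- The family `𝒢` is `s`-joined (its auxiliary bipartite graph is bijoined). -/
def FamJoined {V : Type*} {t : ℕ} (𝒢 : Fin t → SimpleGraph V) (s : ℕ) : Prop :=
  ∀ (X : Finset (V × Fin t)) (Y : Finset V), s ≤ X.card → s ≤ Y.card →
    0 < famPairs 𝒢 X Y

/-- `Γ_𝒢(X)`: the family neighbourhood of `X ⊆ V × [t]`. -/
def famNbhd {V : Type*} [Fintype V] {t : ℕ} (𝒢 : Fin t → SimpleGraph V)
    (X : Finset (V × Fin t)) : Finset V :=
  univ.filter fun v => ∃ p ∈ X, (𝒢 p.2).Adj p.1 v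

/-- A `[t]`-edge-coloured rooted graph: colour classes `graph i`, a set of roots,
and for each non-root vertex a parent joined to it by an edge of colour `parentColor`. -/
structure ColoredRootedGraph (A : Type*) (t : ℕ) where
  graph : Fin t → SimpleGraph A
  isRoot : A → Bool
  parent : A → A
  parentColor : A → Fin t
  parent_adj : ∀ a, isRoot a = false → (graph (parentColor a)).Adj a (parent a)

/-- The degree of `a` in colour `i` within the vertex subset `S`. -/
def monDegOn {A : Type*} {t : ℕ} (H : Fin t → SimpleGraph A)
    (S : Finset A) (a : A) (i : Fin t) : ℕ :=
  (S.filter fun b => (H i).Adj a b).card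

/-- `φ` is an embedding of the colour classes `H` into the family `𝒢`. -/
def IsColEmbedding {A V : Type*} {t : ℕ} (𝒢 : Fin t → SimpleGraph V)
    (H : Fin t → SimpleGraph A) (φ : A → V) : Prop :=
  Function.Injective φ ∧ ∀ i a b, (H i).Adj a b → (𝒢 i).Adj (φ a) (φ b)

/-- `P_φ(ℋ)` relative to the vertex subset `S`: pairs `(φ h, i)` with `h ∈ S` a
non-root vertex and `i` the colour of the edge from `h` to its parent. -/
def Pset {A V : Type*} {t : ℕ} (ℋ : ColoredRootedGraph A t)
    (S : Finset A) (φ : A → V) : Finset (V × Fin t) :=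
  (S.filter fun a => ℋ.isRoot a = false).image fun a => (φ a, ℋ.parentColor a)

/-- The quantity `R(X,φ)` for the embedding `φ` of the part of `ℋ` induced on `S`
into the family `𝒢` restricted to `V'`. -/
def Rfun {A V : Type*} [Fintype V] {t : ℕ} (𝒢 : Fin t → SimpleGraph V)
    (V' : Finset V) (ℋ : ColoredRootedGraph A t) (S : Finset A) (φ : A → V) (D : ℕ)
    (X : Finset (V × Fin t)) : ℤ :=
  (((famNbhd 𝒢 X ∩ V')) \ (S.image φ)).card
    - ∑ p ∈ X, ((D : ℤ) - ∑ a ∈ S.filter (fun a => φ a = p.1), (monDegOn ℋ.graph S a p.2 : ℤ))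
    - ((Pset ℋ S φ) ∩ X).card

/-- `φ` is an `(s,D)`-good embedding (of the part of `ℋ` on `S`, into `𝒢` restricted
to `V'`): `R(X,φ) ≥ 0` for every `X ⊆ V' × [t]` with `|X| ≤ s`. -/
def IsGood {A V : Type*} [Fintype V] {t : ℕ} (𝒢 : Fin t → SimpleGraph V)
    (V' : Finset V) (ℋ : ColoredRootedGraph A t) (S : Finset A) (φ : A → V)
    (s : ℝ) (D : ℕ) : Prop :=
  ∀ X : Finset (V × Fin t), (∀ p ∈ X, p.1 ∈ V') → (X.card : ℝ) ≤ s →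
    0 ≤ Rfun 𝒢 V' ℋ S φ D X

end

/-! Extending `φ` by `u ↦ a` with `a` fresh changes each of the three terms of `R(X, ·)` by
indicators. The image gains `a`, so the neighbourhood term drops by `1[a ∈ Γ_𝒢(X)]`. The
colour-`r` degree grows by one at `φ w` and at `a`, raising `R` by
`1[(φ w, r) ∈ X] + 1[(a, r) ∈ X]`. Finally `P` gains exactly the pair `(a, r)`, which takes
`1[(a, r) ∈ X]` back. -/

namespace Finset

variable {α : Type*} [DecidableEq α]

theorem cast_card_sdiff_insert_of_notMem {a : α} {S : Finset α} (N : Finset α) (ha : a ∉ S) :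
    ((N \ insert a S).card : ℤ) = (N \ S).card - if a ∈ N then 1 else 0 := by
  rw [sdiff_insert]
  split_ifs with haN
  · exact cast_card_erase_of_mem (mem_sdiff.2 ⟨haN, ha⟩)
  · rw [erase_eq_of_notMem fun h => haN (mem_sdiff.1 h).1, sub_zero]

theorem cast_card_insert_inter_of_notMem {q : α} {P : Finset α} (X : Finset α) (hq : q ∉ P) :
    ((insert q P ∩ X).card : ℤ) = (P ∩ X).card + if q ∈ X then 1 else 0 := by
  split_ifs with hqX
  · rw [insert_inter_of_mem hqX, card_insert_of_notMem fun h => hq (mem_inter.1 h).1,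
      Nat.cast_succ]
  · rw [insert_inter_of_notMem hqX, add_zero]

theorem image_univ_optionElim {A : Type*} [Fintype A] (a : α) (φ : A → α) :
    (univ : Finset (Option A)).image (fun o => o.elim a φ) = insert a (univ.image φ) := by
  ext v
  simp [Option.exists, eq_comm]

theorem card_filter_univ_option {A : Type*} [Fintype A] (p : Option A → Prop) [DecidablePred p] :
    (univ.filter p).card
      = (if p none then 1 else 0) + (univ.filter (fun x => p (some x))).card := by
  rw [card_filter, card_filter, Fintype.sum_option]

end Finset

-- Stated with the classical decidability instances, so that it rewrites inside `Rfun`.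
theorem sum_filter_univ_optionElim_eq {A α M : Type*} [Fintype A] [AddCommMonoid M]
    (a : α) (φ : A → α) (v : α) (f : Option A → M) :
    ∑ o ∈ univ.filter (fun o => o.elim a φ = v), f o
      = (if a = v then f none else 0) + ∑ x ∈ univ.filter (fun x => φ x = v), f (some x) := by
  rw [sum_filter, sum_filter, Fintype.sum_option]
  rfl

theorem fst_mem_image_of_mem_Pset {A V : Type*} {t : ℕ} {ℋ : ColoredRootedGraph A t}
    {S : Finset A} {φ : A → V} {q : V × Fin t} (hq : q ∈ Pset ℋ S φ) :
    q.1 ∈ S.image φ := by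
  obtain ⟨x, hx, rfl⟩ := mem_image.1 hq
  exact mem_image_of_mem φ (mem_filter.1 hx).1

section Extension

variable {A V : Type*} [Fintype A] {t : ℕ} {ℋ : ColoredRootedGraph A t}
  {ℋ' : ColoredRootedGraph (Option A) t} {w : A} {r : Fin t}

theorem monDegOn_univ_none (hnew : ∀ i x, (ℋ'.graph i).Adj (some x) none ↔ (i = r ∧ x = w))
    (i : Fin t) : monDegOn ℋ'.graph univ none i = if i = r then 1 else 0 := by
  have hnew' x : (ℋ'.graph i).Adj none (some x) ↔ i = r ∧ x = w :=
    ((ℋ'.graph i).adj_comm _ _).trans (hnew i x)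
  rw [monDegOn, card_filter_univ_option]
  by_cases hi : i = r
  · subst hi
    simp only [hnew', true_and, SimpleGraph.irrefl, if_false, zero_add, if_true]
    exact card_eq_one.2 ⟨w, by ext; simp⟩
  · simp [hnew', hi]

theorem monDegOn_univ_some
    (hadj : ∀ i x y, (ℋ'.graph i).Adj (some x) (some y) ↔ (ℋ.graph i).Adj x y)
    (hnew : ∀ i x, (ℋ'.graph i).Adj (some x) none ↔ (i = r ∧ x = w)) (x : A) (i : Fin t) :
    monDegOn ℋ'.graph univ (some x) i
      = monDegOn ℋ.graph univ x i + if i = r ∧ x = w then 1 else 0 := by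
  rw [monDegOn, monDegOn, card_filter_univ_option, add_comm]
  simp only [hadj, hnew]

theorem sum_monDegOn_extension
    (hadj : ∀ i x y, (ℋ'.graph i).Adj (some x) (some y) ↔ (ℋ.graph i).Adj x y)
    (hnew : ∀ i x, (ℋ'.graph i).Adj (some x) none ↔ (i = r ∧ x = w))
    (a : V) (φ : A → V) (p : V × Fin t) :
    ∑ o ∈ univ.filter (fun o : Option A => o.elim a φ = p.1),
        (monDegOn ℋ'.graph univ o p.2 : ℤ)
      = ∑ x ∈ univ.filter (fun x => φ x = p.1), (monDegOn ℋ.graph univ x p.2 : ℤ)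
        + (if p = (φ w, r) then 1 else 0) + (if p = (a, r) then 1 else 0) := by
  rw [sum_filter_univ_optionElim_eq]
  obtain ⟨v, i⟩ := p
  have hw : ∑ x ∈ univ.filter (fun x => φ x = v), (if i = r ∧ x = w then 1 else 0 : ℤ)
      = if (v, i) = (φ w, r) then 1 else 0 := by
    by_cases hi : i = r <;> simp [hi, eq_comm]
  have ha : (if a = v then (if i = r then 1 else 0) else 0 : ℤ)
      = if (v, i) = (a, r) then 1 else 0 := by
    by_cases hi : i = r
    · subst hi
      simp [eq_comm]
    · simp [hi]
  simp only [monDegOn_univ_some hadj hnew, monDegOn_univ_none hnew, Nat.cast_add,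
    Nat.cast_ite, Nat.cast_one, Nat.cast_zero, sum_add_distrib, hw, ha]
  ring

theorem Pset_extension (hroot : ∀ x, ℋ'.isRoot (some x) = ℋ.isRoot x)
    (hroot' : ℋ'.isRoot none = false) (hpc : ∀ x, ℋ'.parentColor (some x) = ℋ.parentColor x)
    (hpc' : ℋ'.parentColor none = r) (a : V) (φ : A → V) :
    Pset ℋ' univ (fun o => o.elim a φ) = insert (a, r) (Pset ℋ univ φ) := by
  ext q
  simp only [Pset, mem_image, mem_filter, mem_univ, true_and, Option.exists, hroot, hroot',
    hpc, hpc', mem_insert, Option.elim]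
  exact or_congr_left eq_comm

end Extension

theorem R_extension_formula_general {V A : Type*} [Fintype V] [Fintype A] {t : ℕ}
    (𝒢 : Fin t → SimpleGraph V) (D : ℕ)
    (ℋ : ColoredRootedGraph A t) (φ : A → V)
    (w : A) (r : Fin t) (a : V)
    (hafresh : a ∉ Finset.univ.image φ)
    -- ℋ' is the rooted coloured graph ℋ + wu, with the new vertex `u = none`
    (ℋ' : ColoredRootedGraph (Option A) t)
    (hadj : ∀ i x y, (ℋ'.graph i).Adj (some x) (some y) ↔ (ℋ.graph i).Adj x y)
    (hnew : ∀ i x, (ℋ'.graph i).Adj (some x) none ↔ (i = r ∧ x = w))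
    (hroot : ∀ x, ℋ'.isRoot (some x) = ℋ.isRoot x)
    (hroot' : ℋ'.isRoot none = false)
    (hpc : ∀ x, ℋ'.parentColor (some x) = ℋ.parentColor x)
    (hpc' : ℋ'.parentColor none = r) :
    ∀ X : Finset (V × Fin t),
      Rfun 𝒢 Finset.univ ℋ' Finset.univ (fun o => o.elim a φ) D X
          - Rfun 𝒢 Finset.univ ℋ Finset.univ φ D X
        = (if (φ w, r) ∈ X then 1 else 0) - (if a ∈ famNbhd 𝒢 X then 1 else 0) := by
  intro X
  have hPa : (a, r) ∉ Pset ℋ univ φ := fun h => hafresh (fst_mem_image_of_mem_Pset h)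
  simp only [Rfun, inter_univ, image_univ_optionElim, Pset_extension hroot hroot' hpc hpc',
    cast_card_sdiff_insert_of_notMem _ hafresh, cast_card_insert_inter_of_notMem _ hPa,
    sum_monDegOn_extension hadj hnew, sub_add_eq_sub_sub, sum_sub_distrib, sum_ite_eq']
  ring

/-- the change of `R(X,·)` under a one-vertex extension of a good
embedding: `R(X,φ_a) − R(X,φ) = 1[(φ(w),r) ∈ X] − 1[a ∈ Γ_𝒢(X)]`. -/
theorem R_extension_formula {V A : Type*} [Fintype V] [Fintype A] {t : ℕ}
    (𝒢 : Fin t → SimpleGraph V) (D : ℕ)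
    (ℋ : ColoredRootedGraph A t) (φ : A → V)
    (hemb : IsColEmbedding 𝒢 ℋ.graph φ)
    (w : A) (r : Fin t) (a : V)
    (ha : (𝒢 r).Adj (φ w) a) (hafresh : a ∉ Finset.univ.image φ)
    -- ℋ' is the rooted coloured graph ℋ + wu, with the new vertex `u = none`
    (ℋ' : ColoredRootedGraph (Option A) t)
    (hadj : ∀ i x y, (ℋ'.graph i).Adj (some x) (some y) ↔ (ℋ.graph i).Adj x y)
    (hnew : ∀ i x, (ℋ'.graph i).Adj (some x) none ↔ (i = r ∧ x = w))
    (hroot : ∀ x, ℋ'.isRoot (some x) = ℋ.isRoot x)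
    (hroot' : ℋ'.isRoot none = false)
    (hpar : ∀ x, ℋ'.parent (some x) = some (ℋ.parent x))
    (hpar' : ℋ'.parent none = some w)
    (hpc : ∀ x, ℋ'.parentColor (some x) = ℋ.parentColor x)
    (hpc' : ℋ'.parentColor none = r) :
    ∀ X : Finset (V × Fin t),
      Rfun 𝒢 Finset.univ ℋ' Finset.univ (fun o => o.elim a φ) D X
          - Rfun 𝒢 Finset.univ ℋ Finset.univ φ D X
        = (if (φ w, r) ∈ X then 1 else 0) - (if a ∈ famNbhd 𝒢 X then 1 else 0) :=
  R_extension_formula_general 𝒢 D ℋ φ w r a hafresh ℋ' hadj hnew hroot hroot' hpc hpc'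
end

section
/- Suppose an embedding φ: ℋ ↪ 𝒢 satisfies: R(X,φ) ≥ 0 for all |X| ≤ 2s, and |Γ_𝒢(X)| > (D+1)|X| + |φ(ℋ)| whenever s < |X| ≤ 2s. If R(X,φ) = R(Y,φ) = 0 with |X|,|Y| ≤ s, then R(X∪Y,φ) = R(X∩Y,φ) = 0 and |X∪Y| ≤ s. -/
/-!
`R(X, φ)` is the size of `Γ_𝒢(X) ∖ φ(ℋ)`, a monotone union-preserving function of `X`, minus a
sum over `X` of weights that are each at most `D + 1`. Hence `R` is submodular, so for tight `X`
and `Y` we get `R(X ∪ Y) + R(X ∩ Y) ≤ 0`, and goodness makes both terms vanish. If `X ∪ Y` had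
more than `s` elements, its tightness together with the weight bound would give
`|Γ_𝒢(X ∪ Y)| ≤ (D + 1)|X ∪ Y| + |φ(ℋ)|`, contradicting the expansion hypothesis.
-/

open Finset
open scoped Classical

section TightSets

variable {V A : Type*} {t : ℕ}

theorem card_union_add_card_le_of_subset_inter {α : Type*} {s₁ s₂ u : Finset α}
    (h : u ⊆ s₁ ∩ s₂) : #(s₁ ∪ s₂) + #u ≤ #s₁ + #s₂ :=
  card_union_add_card_inter s₁ s₂ ▸ Nat.add_le_add_left (card_le_card h) _

theorem famNbhd_union [Fintype V] (𝒢 : Fin t → SimpleGraph V) (X Y : Finset (V × Fin t)) :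
    famNbhd 𝒢 (X ∪ Y) = famNbhd 𝒢 X ∪ famNbhd 𝒢 Y := by
  ext v
  simp only [famNbhd, mem_filter, mem_univ, true_and, mem_union, or_and_right, exists_or]

theorem famNbhd_mono [Fintype V] (𝒢 : Fin t → SimpleGraph V) : Monotone (famNbhd 𝒢) :=
  fun _ _ hXY _ hv => by
    simp only [famNbhd, mem_filter, mem_univ, true_and] at hv ⊢
    obtain ⟨p, hp, hadj⟩ := hv
    exact ⟨p, hXY hp, hadj⟩

/-- What each `p ∈ X` subtracts from `R(X, φ)`, the `|P_φ(ℋ) ∩ X|` term included. -/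
noncomputable def Rweight (ℋ : ColoredRootedGraph A t) (S : Finset A) (φ : A → V) (D : ℕ)
    (p : V × Fin t) : ℤ :=
  (D - ∑ a ∈ S.filter (fun a => φ a = p.1), (monDegOn ℋ.graph S a p.2 : ℤ))
    + if p ∈ Pset ℋ S φ then 1 else 0

theorem Rweight_le (ℋ : ColoredRootedGraph A t) (S : Finset A) (φ : A → V) (D : ℕ)
    (p : V × Fin t) : Rweight ℋ S φ D p ≤ D + 1 := by
  have hdeg : 0 ≤ ∑ a ∈ S.filter (fun a => φ a = p.1), (monDegOn ℋ.graph S a p.2 : ℤ) :=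
    sum_nonneg fun _ _ => Int.natCast_nonneg _
  unfold Rweight
  split_ifs <;> omega

theorem Rfun_eq_card_sub_sum_Rweight [Fintype V] (𝒢 : Fin t → SimpleGraph V) (V' : Finset V)
    (ℋ : ColoredRootedGraph A t) (S : Finset A) (φ : A → V) (D : ℕ) (X : Finset (V × Fin t)) :
    Rfun 𝒢 V' ℋ S φ D X
      = #((famNbhd 𝒢 X ∩ V') \ S.image φ) - ∑ p ∈ X, Rweight ℋ S φ D p := by
  have hP : (#(Pset ℋ S φ ∩ X) : ℤ) = ∑ p ∈ X, if p ∈ Pset ℋ S φ then 1 else 0 := by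
    rw [inter_comm, ← filter_mem_eq_inter, card_filter]
    push_cast
    rfl
  rw [Rfun, hP]
  simp only [Rweight, sum_add_distrib]
  ring

theorem Rfun_union_add_Rfun_inter_le [Fintype V] (𝒢 : Fin t → SimpleGraph V) (V' : Finset V)
    (ℋ : ColoredRootedGraph A t) (S : Finset A) (φ : A → V) (D : ℕ) (X Y : Finset (V × Fin t)) :
    Rfun 𝒢 V' ℋ S φ D (X ∪ Y) + Rfun 𝒢 V' ℋ S φ D (X ∩ Y)
      ≤ Rfun 𝒢 V' ℋ S φ D X + Rfun 𝒢 V' ℋ S φ D Y := by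
  set N := fun Z => (famNbhd 𝒢 Z ∩ V') \ S.image φ
  have hunion : N (X ∪ Y) = N X ∪ N Y := by
    simp only [N, famNbhd_union, union_inter_distrib_right, union_sdiff_distrib]
  have hN : ∀ {Z W}, Z ⊆ W → N Z ⊆ N W := fun h =>
    sdiff_subset_sdiff (inter_subset_inter_right (famNbhd_mono 𝒢 h)) subset_rfl
  have hinter : N (X ∩ Y) ⊆ N X ∩ N Y :=
    subset_inter (hN inter_subset_left) (hN inter_subset_right)
  have hcard := card_union_add_card_le_of_subset_inter hinter
  rw [← hunion] at hcard
  simp only [Rfun_eq_card_sub_sum_Rweight]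
  have hsum := sum_union_inter (s₁ := X) (s₂ := Y) (f := Rweight ℋ S φ D)
  simp only [N] at hcard
  omega

theorem card_famNbhd_inter_le [Fintype V] (𝒢 : Fin t → SimpleGraph V) (V' : Finset V)
    (ℋ : ColoredRootedGraph A t) (S : Finset A) (φ : A → V) (D : ℕ) (X : Finset (V × Fin t)) :
    (#(famNbhd 𝒢 X ∩ V') : ℤ) ≤ Rfun 𝒢 V' ℋ S φ D X + (D + 1) * #X + #(S.image φ) := by
  have hsplit : #(famNbhd 𝒢 X ∩ V') ≤ #((famNbhd 𝒢 X ∩ V') \ S.image φ) + #(S.image φ) :=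
    card_le_card_sdiff_add_card
  have hweight : ∑ p ∈ X, Rweight ℋ S φ D p ≤ ∑ _p ∈ X, ((D : ℤ) + 1) :=
    sum_le_sum fun p _ => Rweight_le ℋ S φ D p
  rw [sum_const, nsmul_eq_mul] at hweight
  rw [Rfun_eq_card_sub_sum_Rweight]
  linarith

end TightSets

theorem tight_sets_closed_general {V A : Type*} [Fintype V] [Fintype A] {t : ℕ}
    (𝒢 : Fin t → SimpleGraph V) (s D : ℕ)
    (ℋ : ColoredRootedGraph A t) (φ : A → V)
    (hgood : IsGood 𝒢 Finset.univ ℋ Finset.univ φ (2 * s : ℝ) D)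
    (hexp : ∀ X : Finset (V × Fin t), s < X.card → X.card ≤ 2 * s →
      ((D + 1) * X.card + (Finset.univ.image φ).card : ℤ) < (famNbhd 𝒢 X).card) :
    ∀ X Y : Finset (V × Fin t),
      Rfun 𝒢 Finset.univ ℋ Finset.univ φ D X = 0 →
      Rfun 𝒢 Finset.univ ℋ Finset.univ φ D Y = 0 →
      X.card ≤ s → Y.card ≤ s →
        Rfun 𝒢 Finset.univ ℋ Finset.univ φ D (X ∪ Y) = 0 ∧
        Rfun 𝒢 Finset.univ ℋ Finset.univ φ D (X ∩ Y) = 0 ∧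
        (X ∪ Y).card ≤ s := by
  intro X Y hX hY hXs hYs
  have hU : #(X ∪ Y) ≤ 2 * s := (card_union_le X Y).trans (by omega)
  have hI : #(X ∩ Y) ≤ 2 * s := (card_le_card inter_subset_left).trans (by omega)
  have hU₀ := hgood (X ∪ Y) (fun _ _ => mem_univ _) (by exact_mod_cast hU)
  have hI₀ := hgood (X ∩ Y) (fun _ _ => mem_univ _) (by exact_mod_cast hI)
  have hsub := Rfun_union_add_Rfun_inter_le 𝒢 univ ℋ univ φ D X Y
  refine ⟨by omega, by omega, ?_⟩
  by_contra! hbig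
  have hupper := card_famNbhd_inter_le 𝒢 univ ℋ univ φ D (X ∪ Y)
  rw [inter_univ] at hupper
  linarith [hexp _ hbig hU]

/-- if `R(X,φ) ≥ 0` for all `|X| ≤ 2s` and `|Γ_𝒢(X)| > (D+1)|X| + |φ(ℋ)|`
for `s < |X| ≤ 2s`, then tight sets of size `≤ s` are closed under union and
intersection, and their union still has size `≤ s`. -/
theorem tight_sets_closed {V A : Type*} [Fintype V] [Fintype A] {t : ℕ}
    (𝒢 : Fin t → SimpleGraph V) (s D : ℕ)
    (ℋ : ColoredRootedGraph A t) (φ : A → V)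
    (hemb : IsColEmbedding 𝒢 ℋ.graph φ)
    (hgood : IsGood 𝒢 Finset.univ ℋ Finset.univ φ (2 * s : ℝ) D)
    (hexp : ∀ X : Finset (V × Fin t), s < X.card → X.card ≤ 2 * s →
      ((D + 1) * X.card + (Finset.univ.image φ).card : ℤ) < (famNbhd 𝒢 X).card) :
    ∀ X Y : Finset (V × Fin t),
      Rfun 𝒢 Finset.univ ℋ Finset.univ φ D X = 0 →
      Rfun 𝒢 Finset.univ ℋ Finset.univ φ D Y = 0 →
      X.card ≤ s → Y.card ≤ s →
        Rfun 𝒢 Finset.univ ℋ Finset.univ φ D (X ∪ Y) = 0 ∧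
        Rfun 𝒢 Finset.univ ℋ Finset.univ φ D (X ∩ Y) = 0 ∧
        (X ∪ Y).card ≤ s :=
  tight_sets_closed_general 𝒢 s D ℋ φ hgood hexp
end

section
/- (Small-set expansion after deleting a bad set) Let B be an s-bijoined bipartite graph with parts U = V×[t] and V, and let Y_0 ⊆ V with |Y_0| ≥ 3sD + 4s. Then there exists U_0 ⊆ U with |U_0| ≤ s such that for every X ⊆ U \ U_0 with |X| ≤ 2s, the set N*(X, Y_0 \ U_0|_V) has size at least D|X|. -/
/-!
Take `U₀` of maximum size among the sets `W` with `|W| ≤ 3s` and `|N*(W, Y₀)| ≤ D|W|`.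
If `|U₀| > s`, bijoinedness leaves fewer than `s` vertices of `Y₀` outside the neighbourhood
of `U₀`, so `|Y₀| < |N*(U₀, Y₀)| + |U₀| + s ≤ 3sD + 4s`. If some `X` disjoint from `U₀` with
`|X| ≤ 2s` had `|N*(X, Y₀ \ U₀|_V)| < D|X|`, then, since
`N*(U₀ ∪ X, Y₀) ⊆ N*(U₀, Y₀) ∪ N*(X, Y₀ \ U₀|_V)`, the set `U₀ ∪ X` would be a larger such set.
-/

open Finset
open scoped Classical

theorem Finset.exists_max_card_of_card_le {α : Type*} {P : Finset α → Prop} {W₀ : Finset α}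
    {n : ℕ} (hW₀ : P W₀) (hbound : ∀ W, P W → W.card ≤ n) :
    ∃ U, P U ∧ ∀ W, P W → W.card ≤ U.card := by
  let Q k := ∃ W, P W ∧ W.card = k
  obtain ⟨U, hU, hUk⟩ : Q (Nat.findGreatest Q n) :=
    Nat.findGreatest_spec (hbound W₀ hW₀) ⟨W₀, hW₀, rfl⟩
  exact ⟨U, hU, fun W hW => hUk ▸ Nat.le_findGreatest (hbound W hW) ⟨W, hW, rfl⟩⟩

namespace SmallSetExpansion

variable {α ι : Type*} (B : α × ι → α → Prop)

/-- `N*(X, Y) = N(X, Y) \ X|_V`. -/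
noncomputable def extNbhd [DecidableEq α] (X : Finset (α × ι)) (Y : Finset α) : Finset α :=
  (Y.filter fun v => ∃ p ∈ X, B p v) \ X.image Prod.fst

theorem extNbhd_union_subset [DecidableEq α] [DecidableEq ι] (W X : Finset (α × ι))
    (Y : Finset α) :
    extNbhd B (W ∪ X) Y ⊆ extNbhd B W Y ∪ extNbhd B X (Y \ W.image Prod.fst) := by
  intro v hv
  simp only [extNbhd, mem_union, mem_sdiff, mem_filter, mem_image, Prod.exists] at hv ⊢
  grind

theorem card_extNbhd_union_le [DecidableEq α] [DecidableEq ι] (W X : Finset (α × ι))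
    (Y : Finset α) :
    (extNbhd B (W ∪ X) Y).card ≤
      (extNbhd B W Y).card + (extNbhd B X (Y \ W.image Prod.fst)).card :=
  (card_le_card (extNbhd_union_subset B W X Y)).trans (card_union_le _ _)

variable {B} {s : ℕ}
  (hjoin : ∀ (X : Finset (α × ι)) (Y : Finset α), s ≤ X.card → s ≤ Y.card →
    ∃ p ∈ X, ∃ v ∈ Y, B p v)
include hjoin

theorem card_filter_not_adj_lt {W : Finset (α × ι)} (hW : s ≤ W.card) (Y : Finset α) :
    (Y.filter fun v => ¬∃ p ∈ W, B p v).card < s := by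
  by_contra hY
  obtain ⟨p, hp, v, hv, hpv⟩ := hjoin W _ hW (not_lt.mp hY)
  exact (mem_filter.mp hv).2 ⟨p, hp, hpv⟩

theorem card_lt_card_extNbhd_add [DecidableEq α] {W : Finset (α × ι)} (hW : s ≤ W.card)
    (Y : Finset α) :
    Y.card < (extNbhd B W Y).card + W.card + s := by
  have hsplit := card_filter_add_card_filter_not (s := Y) (fun v => ∃ p ∈ W, B p v)
  have hadj : (Y.filter fun v => ∃ p ∈ W, B p v).card ≤
      (extNbhd B W Y).card + (W.image Prod.fst).card := card_le_card_sdiff_add_card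
  have := card_filter_not_adj_lt hjoin hW Y
  have := card_image_le (s := W) (f := Prod.fst)
  omega

end SmallSetExpansion

open SmallSetExpansion in
theorem small_set_expansion_general {V : Type*} {t : ℕ}
    (s D : ℕ)
    (B : V × Fin t → V → Prop)
    (hjoin : ∀ (X : Finset (V × Fin t)) (Y : Finset V), s ≤ X.card → s ≤ Y.card →
      ∃ p ∈ X, ∃ v ∈ Y, B p v)
    (Y0 : Finset V) (hY0 : 3 * s * D + 4 * s ≤ Y0.card) :
    ∃ U0 : Finset (V × Fin t), U0.card ≤ s ∧
      ∀ X : Finset (V × Fin t), Disjoint X U0 → X.card ≤ 2 * s →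
        D * X.card ≤
          (((Y0 \ U0.image Prod.fst).filter fun v => ∃ p ∈ X, B p v)
            \ X.image Prod.fst).card := by
  obtain ⟨U0, ⟨hU0, hU0nbhd⟩, hmax⟩ := exists_max_card_of_card_le
    (P := fun W => W.card ≤ 3 * s ∧ (extNbhd B W Y0).card ≤ D * W.card) (W₀ := ∅)
    ⟨by simp, by simp [extNbhd]⟩ fun _ hW => hW.1
  have hU0s : U0.card ≤ s := by
    by_contra! hs
    have := card_lt_card_extNbhd_add hjoin hs.le Y0
    have := Nat.mul_le_mul_left D hU0
    linarith
  refine ⟨U0, hU0s, fun X hdisj hX => ?_⟩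
  by_contra! hlt
  have hXpos : 0 < X.card := Nat.pos_of_ne_zero fun h => by simp [h] at hlt
  have hcard := card_union_of_disjoint hdisj.symm
  have hunion : (extNbhd B (U0 ∪ X) Y0).card ≤ D * (U0 ∪ X).card := by
    rw [hcard, Nat.mul_add]
    exact (card_extNbhd_union_le B U0 X Y0).trans (add_le_add hU0nbhd hlt.le)
  have := hmax (U0 ∪ X) ⟨by omega, hunion⟩
  omega

/-- Small-set expansion after deleting a bad set: in an `s`-bijoined
bipartite graph with parts `V × [t]` and `V`, for any `Y₀` with `|Y₀| ≥ 3sD + 4s`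
there is `U₀` of size `≤ s` such that every `X ⊆ U \ U₀` with `|X| ≤ 2s` has
`|N*(X, Y₀ \ U₀|_V)| ≥ D|X|`. -/
theorem small_set_expansion {V : Type*} [Fintype V] {t : ℕ}
    (s D : ℕ) (hs : 1 ≤ s) (hD : 1 ≤ D) (ht : 1 ≤ t)
    (B : V × Fin t → V → Prop)
    (hjoin : ∀ (X : Finset (V × Fin t)) (Y : Finset V), s ≤ X.card → s ≤ Y.card →
      ∃ p ∈ X, ∃ v ∈ Y, B p v)
    (Y0 : Finset V) (hY0 : 3 * s * D + 4 * s ≤ Y0.card) :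
    ∃ U0 : Finset (V × Fin t), U0.card ≤ s ∧
      ∀ X : Finset (V × Fin t), Disjoint X U0 → X.card ≤ 2 * s →
        D * X.card ≤
          (((Y0 \ U0.image Prod.fst).filter fun v => ∃ p ∈ X, B p v)
            \ X.image Prod.fst).card :=
  small_set_expansion_general s D B hjoin Y0 hY0
end

section
/- (High minimum monochromatic degree vertex) For any 0 < c < 1, if 𝒢 = {G_1,...,G_t} is a family of (p,β)-jumbled graphs on the common vertex set V with |V| ≥ c^{-1} t^{1/2} β p^{-1}, then there exists a vertex v ∈ V with deg_{G_i}(v) ≥ (1−c)p|V| for every i ∈ [t]. -/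
open Finset
open scoped Classical

/-! If every vertex had low degree in some colour, then by pigeonhole one colour `i` would
have at least `|V|/t` vertices of degree below `(1-c)p|V|` in `G_i`. Counting the edges
leaving this set `B` and comparing with jumbledness gives `cp√(|B||V|) < β`, whereas
`|B| ≥ |V|/t` and the lower bound on `|V|` give `cp√(|B||V|) ≥ cp|V|/√t ≥ β`. -/

section Jumbled

variable {V : Type*} {G : SimpleGraph V}

theorem epairs_eq_sum_card_filter_adj (G : SimpleGraph V) (X Y : Finset V) :
    epairs G X Y = ∑ x ∈ X, (Y.filter (G.Adj x)).card := by
  rw [epairs, card_filter, sum_product]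
  simp only [card_filter]

theorem IsJumbled.mul_sqrt_lt_of_forall_card_adj_lt {p β δ : ℝ} (hG : IsJumbled G p β)
    {X Y : Finset V} (hX : X.Nonempty)
    (hdeg : ∀ x ∈ X, ((Y.filter (G.Adj x)).card : ℝ) < (p - δ) * Y.card) :
    δ * Real.sqrt (X.card * Y.card) < β := by
  have hupper : (epairs G X Y : ℝ) < (p - δ) * X.card * Y.card := by
    rw [epairs_eq_sum_card_filter_adj, Nat.cast_sum]
    calc ∑ x ∈ X, ((Y.filter (G.Adj x)).card : ℝ) < ∑ _x ∈ X, (p - δ) * Y.card :=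
          sum_lt_sum_of_nonempty hX hdeg
      _ = (p - δ) * X.card * Y.card := by rw [sum_const, nsmul_eq_mul]; ring
  have hlower := (abs_le.1 (hG X Y)).1
  obtain ⟨x, hx⟩ := hX
  have hXpos : (0 : ℝ) < X.card := by exact_mod_cast card_pos.2 ⟨x, hx⟩
  have hYpos : (0 : ℝ) < Y.card := Nat.cast_pos.2 <| card_pos.2 <|
    nonempty_iff_ne_empty.2 fun hY => by simpa [hY] using hdeg x hx
  set s := Real.sqrt (X.card * Y.card)
  have hs : 0 < s := Real.sqrt_pos.2 (mul_pos hXpos hYpos)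
  have hss : s * s = X.card * Y.card := Real.mul_self_sqrt (mul_pos hXpos hYpos).le
  have : δ * s * s < β * s := by rw [mul_assoc, hss]; linarith
  exact lt_of_mul_lt_mul_right this hs.le

end Jumbled

theorem le_mul_sqrt_mul_of_div_le {c p t β n b : ℝ} (hc : 0 < c) (hp : 0 < p) (ht : 0 < t)
    (hn0 : 0 ≤ n) (hn : c⁻¹ * Real.sqrt t * β / p ≤ n) (hb : n / t ≤ b) :
    β ≤ c * p * Real.sqrt (b * n) := by
  have hβ : β * Real.sqrt t ≤ c * p * n := by
    have hn' : c⁻¹ * Real.sqrt t * β ≤ n * p := (div_le_iff₀ hp).1 hn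
    calc β * Real.sqrt t = c * (c⁻¹ * Real.sqrt t * β) := by field_simp
      _ ≤ c * (n * p) := by gcongr
      _ = c * p * n := by ring
  have hsqrt : n / Real.sqrt t ≤ Real.sqrt (b * n) := by
    rw [show n / Real.sqrt t = Real.sqrt (n ^ 2 / t) by
      rw [Real.sqrt_div' _ ht.le, Real.sqrt_sq hn0]]
    refine Real.sqrt_le_sqrt ?_
    calc n ^ 2 / t = n / t * n := by ring
      _ ≤ b * n := by gcongr
  calc β ≤ c * p * (n / Real.sqrt t) := by
        rw [mul_div_assoc', le_div_iff₀ (Real.sqrt_pos.2 ht)]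
        exact hβ
    _ ≤ c * p * Real.sqrt (b * n) := by gcongr

theorem exists_high_min_mono_degree_general {V : Type*} [Fintype V] {t : ℕ}
    (𝒢 : Fin t → SimpleGraph V) (p β c : ℝ)
    (hc0 : 0 < c) (hp0 : 0 < p) (hβ : 1 ≤ β)
    (ht : 1 ≤ t) (hjum : ∀ i, IsJumbled (𝒢 i) p β)
    (hn : c⁻¹ * Real.sqrt t * β / p ≤ (Fintype.card V : ℝ)) :
    ∃ v : V, ∀ i : Fin t,
      (1 - c) * p * (Fintype.card V : ℝ) ≤ (monDegOn 𝒢 Finset.univ v i : ℝ) := by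
  by_contra! hlow
  choose colour hcolour using hlow
  set n : ℝ := (Fintype.card V : ℝ)
  have : Nonempty (Fin t) := ⟨⟨0, ht⟩⟩
  have ht0 : (0 : ℝ) < t := by exact_mod_cast ht
  have hn0 : 0 < n := lt_of_lt_of_le (by positivity) hn
  obtain ⟨i, hi⟩ := Fintype.exists_le_card_fiber_of_nsmul_le_card colour (b := n / t)
    (by rw [Fintype.card_fin, nsmul_eq_mul, mul_div_cancel₀ _ ht0.ne'])
  set B := univ.filter fun v => colour v = i
  have hB : B.Nonempty := card_pos.1 (by exact_mod_cast (div_pos hn0 ht0).trans_le hi)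
  have hsmall : c * p * Real.sqrt (B.card * n) < β :=
    (hjum i).mul_sqrt_lt_of_forall_card_adj_lt hB fun v hv => by
      have := hcolour v
      rw [(mem_filter.1 hv).2] at this
      simpa [monDegOn, n, sub_mul, mul_sub] using this
  exact hsmall.not_ge (le_mul_sqrt_mul_of_div_le hc0 hp0 ht0 hn0.le hn hi)

/-- High minimum monochromatic degree vertex: in a family of
`(p,β)`-jumbled graphs on `V` with `|V| ≥ c⁻¹ √t β / p`, some vertex has degree at
least `(1−c)p|V|` in every graph of the family. -/
theorem exists_high_min_mono_degree {V : Type*} [Fintype V] {t : ℕ}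
    (𝒢 : Fin t → SimpleGraph V) (p β c : ℝ)
    (hc0 : 0 < c) (hc1 : c < 1) (hp0 : 0 < p) (hp1 : p < 1) (hβ : 1 ≤ β)
    (ht : 1 ≤ t) (hjum : ∀ i, IsJumbled (𝒢 i) p β)
    (hn : c⁻¹ * Real.sqrt t * β / p ≤ (Fintype.card V : ℝ)) :
    ∃ v : V, ∀ i : Fin t,
      (1 - c) * p * (Fintype.card V : ℝ) ≤ (monDegOn 𝒢 Finset.univ v i : ℝ) :=
  exists_high_min_mono_degree_general 𝒢 p β c hc0 hp0 hβ ht hjum hn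
end
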